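/- Let P = conv{x_1, …, x_n} ⊆ ℝ^p be the convex hull of a nonempty finite set of points. Then the solid angles of the normal cones at the extreme points of P form a probability distribution: Σ_{h ∈ ext(P)} ω(N_P(h)) = 1, where the sum runs over the (finitely many) extreme points of P. -/

import Mathlib

open MeasureTheory ProbabilityTheory Metric Set
open scoped Pointwise

/-- The standard Gaussian measure `N(0, I_p)` on `ℝ^p`. -/
noncomputable def stdGaussian (p : ℕ) : Measure (EuclideanSpace ℝ (Fin p)) :=
  (Measure.pi fun _ : Fin p => gaussianReal 0 1).map
    (MeasurableEquiv.toLp 2 (Fin p → ℝ))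

/-- The solid angle of a cone `K ⊆ ℝ^p`: its standard Gaussian measure. -/
noncomputable def solidAngle {p : ℕ} (K : Set (EuclideanSpace ℝ (Fin p))) : ℝ :=
  (stdGaussian p K).toReal

/-- The normal cone of a convex set `C` at a point `x`. -/
def normalCone {p : ℕ} (C : Set (EuclideanSpace ℝ (Fin p))) (x : EuclideanSpace ℝ (Fin p)) :
    Set (EuclideanSpace ℝ (Fin p)) :=
  {w | ∀ y ∈ C, (inner ℝ w (y - x) : ℝ) ≤ 0}

/-! For every direction `z`, the linear functional `⟪z, ·⟫` attains its maximum on the polytope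
`P` at some extreme point `e`, i.e. `z ∈ N_P(e)`; so the normal cones at the extreme points cover
`ℝ^p`. Two of them, at distinct points `a` and `b`, meet only inside the hyperplane
`⟪a - b, ·⟫ = 0`, which is null for the standard Gaussian. Their Gaussian measures therefore add
up to the total mass `1`. -/

open scoped RealInnerProductSpace

theorem IsCompact.exists_mem_extremePoints_isMaxOn {E : Type*} [AddCommGroup E] [Module ℝ E]
    [TopologicalSpace E] [T2Space E] [IsTopologicalAddGroup E] [ContinuousSMul ℝ E]
    [LocallyConvexSpace ℝ E] {s : Set E} (hs : IsCompact s) (hne : s.Nonempty)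
    (l : StrongDual ℝ E) : ∃ e ∈ s.extremePoints ℝ, IsMaxOn l s e := by
  obtain ⟨z, hzs, hz⟩ := hs.exists_isMaxOn hne l.continuous.continuousOn
  have hexp : IsExposed ℝ s {y ∈ s | ∀ x ∈ s, l x ≤ l y} := fun _ => ⟨l, rfl⟩
  obtain ⟨e, he⟩ := (hexp.isCompact hs).extremePoints_nonempty ⟨z, hzs, hz⟩
  exact ⟨e, hexp.isExtreme.extremePoints_subset_extremePoints he, he.1.2⟩

theorem ProbabilityTheory.IsGaussian.measure_preimage_singleton_eq_zero {E : Type*}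
    [NormedAddCommGroup E] [NormedSpace ℝ E] [MeasurableSpace E] [BorelSpace E]
    {μ : Measure E} [IsGaussian μ] {L : StrongDual ℝ E} (hL : Var[L; μ] ≠ 0) (c : ℝ) :
    μ (L ⁻¹' {c}) = 0 := by
  have hvar : (Var[L; μ]).toNNReal ≠ 0 :=
    (Real.toNNReal_pos.mpr ((variance_nonneg L μ).lt_of_ne' hL)).ne'
  have := nullSingletonClass_gaussianReal (μ := μ[L]) hvar
  rw [← Measure.map_apply L.measurable (measurableSet_singleton c),
    IsGaussian.map_eq_gaussianReal, measure_singleton]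

theorem ProbabilityTheory.stdGaussian_preimage_singleton_eq_zero {E : Type*}
    [NormedAddCommGroup E] [InnerProductSpace ℝ E] [FiniteDimensional ℝ E] [MeasurableSpace E]
    [BorelSpace E] {L : StrongDual ℝ E} (hL : L ≠ 0) (c : ℝ) :
    stdGaussian E (L ⁻¹' {c}) = 0 :=
  IsGaussian.measure_preimage_singleton_eq_zero
    (by simpa [variance_dual_stdGaussian] using hL) c

theorem stdGaussian_eq_stdGaussian_euclideanSpace (p : ℕ) :
    stdGaussian p = ProbabilityTheory.stdGaussian (EuclideanSpace ℝ (Fin p)) :=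
  map_pi_eq_stdGaussian

instance (p : ℕ) : IsProbabilityMeasure (stdGaussian p) := by
  rw [stdGaussian_eq_stdGaussian_euclideanSpace]
  infer_instance

theorem sum_measureReal_eq_one_of_biUnion_eq_univ {α ι : Type*} [MeasurableSpace α]
    {μ : Measure α} [IsProbabilityMeasure μ] {s : Finset ι} {f : ι → Set α}
    (hd : (s : Set ι).Pairwise (Function.onFun (AEDisjoint μ) f))
    (hm : ∀ i ∈ s, NullMeasurableSet (f i) μ)
    (hU : ⋃ i ∈ s, f i = univ) : ∑ i ∈ s, μ.real (f i) = 1 := by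
  rw [← measureReal_biUnion_finset₀ hd hm, hU, probReal_univ]

section NormalCone

variable {p : ℕ} {C : Set (EuclideanSpace ℝ (Fin p))}

theorem mem_normalCone_iff_isMaxOn {w x : EuclideanSpace ℝ (Fin p)} :
    w ∈ normalCone C x ↔ IsMaxOn (innerSL ℝ w) C x := by
  simp only [normalCone, mem_ofPred_eq, inner_sub_right, sub_nonpos, isMaxOn_iff,
    innerSL_apply_apply]

theorem isClosed_normalCone (x : EuclideanSpace ℝ (Fin p)) : IsClosed (normalCone C x) := by
  have : normalCone C x = ⋂ y ∈ C, {w | ⟪w, y - x⟫ ≤ 0} := by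
    ext w; simp [normalCone]
  rw [this]
  exact isClosed_biInter fun y _ => isClosed_le (by fun_prop) continuous_const

theorem biUnion_extremePoints_normalCone_eq_univ (hC : IsCompact C) (hne : C.Nonempty) :
    ⋃ e ∈ C.extremePoints ℝ, normalCone C e = univ := by
  refine eq_univ_of_forall fun w => mem_iUnion₂.mpr ?_
  obtain ⟨e, he, hmax⟩ := hC.exists_mem_extremePoints_isMaxOn hne (innerSL ℝ w)
  exact ⟨e, he, mem_normalCone_iff_isMaxOn.mpr hmax⟩

theorem normalCone_inter_normalCone_subset {a b : EuclideanSpace ℝ (Fin p)} (ha : a ∈ C)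
    (hb : b ∈ C) : normalCone C a ∩ normalCone C b ⊆ innerSL ℝ (a - b) ⁻¹' {0} := by
  rintro w ⟨hwa, hwb⟩
  have h₁ := hwa b hb
  have h₂ := hwb a ha
  rw [inner_sub_right] at h₁ h₂
  rw [mem_preimage, innerSL_apply_apply, mem_singleton_iff, inner_sub_left, real_inner_comm w a,
    real_inner_comm w b]
  linarith

theorem aedisjoint_normalCone {a b : EuclideanSpace ℝ (Fin p)} (ha : a ∈ C) (hb : b ∈ C)
    (hab : a ≠ b) : AEDisjoint (stdGaussian p) (normalCone C a) (normalCone C b) := by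
  refine measure_mono_null (normalCone_inter_normalCone_subset ha hb) ?_
  rw [stdGaussian_eq_stdGaussian_euclideanSpace]
  exact stdGaussian_preimage_singleton_eq_zero (by simpa [sub_eq_zero] using hab) 0

end NormalCone

open scoped Classical in
/-- The solid angles of the normal cones at the extreme points of a polytope
`P = conv{x₁, …, xₙ}` form a probability distribution: they sum to `1`. -/
theorem sum_solidAngle_normalCone_eq_one
    (p : ℕ) (s : Finset (EuclideanSpace ℝ (Fin p))) (hs : s.Nonempty)
    (P : Set (EuclideanSpace ℝ (Fin p))) (hP : P = convexHull ℝ (s : Set (EuclideanSpace ℝ (Fin p)))) :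
    ∑ h ∈ s.filter (fun h => h ∈ Set.extremePoints ℝ P), solidAngle (normalCone P h) = 1 := by
  subst hP
  have hPc := s.finite_toSet.isCompact_convexHull ℝ
  have hPne := (Finset.coe_nonempty.mpr hs).convexHull (𝕜 := ℝ)
  have mem_extreme (e) : e ∈ s.filter (· ∈ (convexHull ℝ (s : Set _)).extremePoints ℝ) ↔
      e ∈ (convexHull ℝ (s : Set _)).extremePoints ℝ := by
    simpa using fun he => Finset.mem_coe.mp (extremePoints_convexHull_subset he)
  apply sum_measureReal_eq_one_of_biUnion_eq_univ
  · intro a ha b hb hab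
    exact aedisjoint_normalCone ((mem_extreme a).mp ha).1 ((mem_extreme b).mp hb).1 hab
  · exact fun e _ => (isClosed_normalCone e).measurableSet.nullMeasurableSet
  · simpa only [mem_extreme] using biUnion_extremePoints_normalCone_eq_univ hPc hPne
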